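/- The triangle multigraph T_{2,5,5} (three vertices with pairwise edge multiplicities 2, 5, 5) is strongly Z_7-connected: every Z_7-boundary is achieved by some orientation. -/

import Mathlib

/-- The direction of edge `i` under orientation `o`: if `o i = true` the
reference direction is reversed. -/
def edir {V : Type} {m : ℕ} (ends : Fin m → V × V) (o : Fin m → Bool) (i : Fin m) : V × V :=
  if o i then ((ends i).2, (ends i).1) else ends i

/-- Contribution of edge `i` to `d⁺ - d⁻` at vertex `v`, computed in `ZMod n`. -/
def contrib {V : Type} [DecidableEq V] {m : ℕ} (n : ℕ) (ends : Fin m → V × V)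
    (o : Fin m → Bool) (i : Fin m) (v : V) : ZMod n :=
  (if (edir ends o i).1 = v then 1 else 0) - (if (edir ends o i).2 = v then 1 else 0)

/-- `d⁺_D(v) - d⁻_D(v)` in `ZMod n` for the orientation `o` of the multigraph
with edge-endpoint function `ends`. -/
def netDeg {V : Type} [DecidableEq V] {m : ℕ} (n : ℕ) (ends : Fin m → V × V)
    (o : Fin m → Bool) (v : V) : ZMod n :=
  ∑ i : Fin m, contrib n ends o i v

def T255 : Fin 12 → Fin 3 × Fin 3 :=
  ![(1, 2), (1, 2), (0, 2), (0, 2), (0, 2), (0, 2), (0, 2),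
    (0, 1), (0, 1), (0, 1), (0, 1), (0, 1)]

/-- The sign (in `ZMod 7`) with which an edge contributes at its reference tail. -/
def sg (b : Bool) : ZMod 7 := if b then -1 else 1

lemma contrib_eq {V : Type} [DecidableEq V] {m : ℕ} (ends : Fin m → V × V)
    (o : Fin m → Bool) (i : Fin m) (v : V) :
    contrib 7 ends o i v =
      sg (o i) * ((if (ends i).1 = v then 1 else 0) - (if (ends i).2 = v then 1 else 0)) := by
  cases h : o i <;> simp [contrib, edir, sg, h]

lemma netDeg0 (o : Fin 12 → Bool) : netDeg 7 T255 o 0 =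
    sg (o 2) + (sg (o 3) + (sg (o 4) + (sg (o 5) + (sg (o 6) +
    (sg (o 7) + (sg (o 8) + (sg (o 9) + (sg (o 10) + sg (o 11))))))))) := by
  simp [netDeg, contrib_eq, T255, Fin.sum_univ_succ]

lemma netDeg1 (o : Fin 12 → Bool) : netDeg 7 T255 o 1 =
    sg (o 0) + (sg (o 1) + (-sg (o 7) + (-sg (o 8) + (-sg (o 9) + (-sg (o 10) + -sg (o 11)))))) := by
  simp [netDeg, contrib_eq, T255, Fin.sum_univ_succ]

lemma netDeg2 (o : Fin 12 → Bool) : netDeg 7 T255 o 2 =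
    -sg (o 0) + (-sg (o 1) + (-sg (o 2) + (-sg (o 3) + (-sg (o 4) + (-sg (o 5) + -sg (o 6)))))) := by
  simp [netDeg, contrib_eq, T255, Fin.sum_univ_succ]

/-- Number of reversed edges among a 5-edge bundle needed to realize net flow `b`. -/
def tcount (b : ZMod 7) : ℕ :=
  match b.val with
  | 5 => 0 | 3 => 1 | 1 => 2 | 6 => 3 | 4 => 4 | _ => 5

def signs5 (b : ZMod 7) (i : Fin 5) : Bool := decide (i.val < tcount b)

def signs2 (a : ZMod 7) (i : Fin 2) : Bool :=
  if a = 0 then i.val = 1 else if a = 2 then false else true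

lemma s5sum : ∀ b : ZMod 7, b ≠ 0 →
    sg (signs5 b 0) + (sg (signs5 b 1) + (sg (signs5 b 2) + (sg (signs5 b 3) + sg (signs5 b 4)))) = b := by
  decide

lemma s2sum : ∀ a : ZMod 7, (a = 0 ∨ a = 2 ∨ a = 5) →
    sg (signs2 a 0) + sg (signs2 a 1) = a := by decide

lemma abc : ∀ x y : ZMod 7, ∃ a b c : ZMod 7,
    (a = 0 ∨ a = 2 ∨ a = 5) ∧ b ≠ 0 ∧ c ≠ 0 ∧ b + c = x ∧ a - c = y := by decide

theorem T255_strongly_Z7_connected (β : Fin 3 → ZMod 7) (hβ : β 0 + β 1 + β 2 = 0) :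
    ∃ o : Fin 12 → Bool, ∀ v : Fin 3, netDeg 7 T255 o v = β v := by
  obtain ⟨a, b, c, ha, hb, hc, hx, hy⟩ := abc (β 0) (β 1)
  have hSa := s2sum a ha
  have hSb := s5sum b hb
  have hSc := s5sum c hc
  refine ⟨![signs2 a 0, signs2 a 1, signs5 b 0, signs5 b 1, signs5 b 2, signs5 b 3,
    signs5 b 4, signs5 c 0, signs5 c 1, signs5 c 2, signs5 c 3, signs5 c 4], ?_⟩
  set o : Fin 12 → Bool := ![signs2 a 0, signs2 a 1, signs5 b 0, signs5 b 1, signs5 b 2,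
    signs5 b 3, signs5 b 4, signs5 c 0, signs5 c 1, signs5 c 2, signs5 c 3, signs5 c 4] with ho
  have e0 : o 0 = signs2 a 0 := rfl
  have e1 : o 1 = signs2 a 1 := rfl
  have e2 : o 2 = signs5 b 0 := rfl
  have e3 : o 3 = signs5 b 1 := rfl
  have e4 : o 4 = signs5 b 2 := rfl
  have e5 : o 5 = signs5 b 3 := rfl
  have e6 : o 6 = signs5 b 4 := rfl
  have e7 : o 7 = signs5 c 0 := rfl
  have e8 : o 8 = signs5 c 1 := rfl
  have e9 : o 9 = signs5 c 2 := rfl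
  have e10 : o 10 = signs5 c 3 := rfl
  have e11 : o 11 = signs5 c 4 := rfl
  intro v
  fin_cases v
  · show netDeg 7 T255 o 0 = β 0
    rw [netDeg0, e2, e3, e4, e5, e6, e7, e8, e9, e10, e11]
    linear_combination hSb + hSc + hx
  · show netDeg 7 T255 o 1 = β 1
    rw [netDeg1, e0, e1, e7, e8, e9, e10, e11]
    linear_combination hSa - hSc + hy
  · show netDeg 7 T255 o 2 = β 2
    rw [netDeg2, e0, e1, e2, e3, e4, e5, e6]
    linear_combination -hSa - hSb - hx - hy - hβ
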